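/- For every real γ with 0 < γ ≤ 1, the average of the column player's optimistic Stackelberg values of G1 and G2 equals 3/2, i.e., (StackVal_2(G1) + StackVal_2(G2))/2 = 3/2; this is the column player's expected Stackelberg value under the uniform distribution over {G1, G2}. -/
import Mathlib


/-!
Statement 2: For every real γ with 0 < γ ≤ 1, the average of the column player's
optimistic Stackelberg values of G1 and G2 equals 3/2 — the column player's expected
Stackelberg value under the uniform distribution over {G1, G2}.

Row actions: `0 = A`, `1 = B`.  Column actions: `0 = C`, `1 = D`.
-/

/-- A mixed strategy on a finite set: nonnegative and summing to 1. -/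
def IsMixed {S : Type*} [Fintype S] (p : S → ℝ) : Prop :=
  (∀ s, 0 ≤ p s) ∧ ∑ s, p s = 1

/-- Player 1's utilities in game `G1`. -/
noncomputable def U1G1 (γ : ℝ) : Fin 2 → Fin 2 → ℝ := ![![16 / γ, 16 / γ], ![2, 0]]

/-- Player 2's utilities in game `G1`. -/
noncomputable def U2G1 (γ : ℝ) : Fin 2 → Fin 2 → ℝ := ![![1, -32 / γ], ![0, 2]]

/-- Player 1's utilities in game `G2`. -/
noncomputable def U1G2 : Fin 2 → Fin 2 → ℝ := ![![1, 0], ![9 / 10, 1 / 10]]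

/-- Player 2's utilities in game `G2`. -/
noncomputable def U2G2 (γ : ℝ) : Fin 2 → Fin 2 → ℝ := ![![1, -32 / γ], ![0, 2]]

/-- Expected utility of utility matrix `U` when the row player plays the pure action `x`
and the column player plays the mixed strategy `y`. -/
noncomputable def evalRow (U : Fin 2 → Fin 2 → ℝ) (x : Fin 2) (y : Fin 2 → ℝ) : ℝ :=
  ∑ b, y b * U x b

/-- The row player's pure best responses to the mixed column strategy `y`. -/
def rowBR (U1 : Fin 2 → Fin 2 → ℝ) (y : Fin 2 → ℝ) : Set (Fin 2) :=
  {x | ∀ x', evalRow U1 x' y ≤ evalRow U1 x y}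

/-- The optimistic Stackelberg value of the column player: the supremum over mixed column
strategies `y` of the maximum of the column player's utility over the row player's pure
best responses to `y` (ties broken in the column player's favor). -/
noncomputable def stackVal2 (U1 U2 : Fin 2 → Fin 2 → ℝ) : ℝ :=
  sSup {v | ∃ y, IsMixed y ∧
    IsGreatest {u | ∃ x ∈ rowBR U1 y, u = evalRow U2 x y} v}

lemma evalRow_eq (U : Fin 2 → Fin 2 → ℝ) (x : Fin 2) (y : Fin 2 → ℝ) :
    evalRow U x y = y 0 * U x 0 + y 1 * U x 1 := by
  simp [evalRow, Fin.sum_univ_two]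

lemma stackG1 (γ : ℝ) (hγ0 : 0 < γ) (hγ1 : γ ≤ 1) :
    stackVal2 (U1G1 γ) (U2G1 γ) = 1 := by
  have h16 : (16:ℝ) ≤ 16 / γ := by
    rw [le_div_iff₀ hγ0]; nlinarith
  have hinv : 0 < 32 / γ := by positivity
  apply IsGreatest.csSup_eq
  constructor
  · -- 1 is attained at y = (1,0)
    refine ⟨![1,0], ⟨by intro s; fin_cases s <;> norm_num, by simp [Fin.sum_univ_two]⟩, ?_, ?_⟩
    · refine ⟨0, ?_, ?_⟩
      · intro x'
        fin_cases x' <;> simp [rowBR, evalRow_eq, U1G1] <;> linarith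
      · simp [evalRow_eq, U2G1]
    · rintro u ⟨x, hx, rfl⟩
      fin_cases x <;> simp [evalRow_eq, U2G1] <;> norm_num
  · -- 1 is an upper bound
    rintro v ⟨y, ⟨hy0, hy1⟩, ⟨x, hx, rfl⟩, _⟩
    have h0 := hy0 0
    have h1 := hy0 1
    have hs : y 0 + y 1 = 1 := by simpa [Fin.sum_univ_two] using hy1
    fin_cases x
    · rw [evalRow_eq]
      simp only [U2G1, Fin.mk_zero, Fin.mk_one, Matrix.cons_val_zero, Matrix.cons_val_one, Matrix.head_cons, neg_div]
      nlinarith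
    · exfalso
      have := hx 0
      rw [evalRow_eq, evalRow_eq] at this
      simp only [U1G1, Fin.mk_zero, Fin.mk_one, Matrix.cons_val_zero, Matrix.cons_val_one, Matrix.head_cons] at this
      nlinarith [mul_nonneg h1 (le_of_lt (by positivity : (0:ℝ) < 16/γ))]

lemma stackG2 (γ : ℝ) (hγ0 : 0 < γ) (hγ1 : γ ≤ 1) :
    stackVal2 U1G2 (U2G2 γ) = 2 := by
  have hinv : 0 < 32 / γ := by positivity
  apply IsGreatest.csSup_eq
  constructor
  · refine ⟨![0,1], ⟨by intro s; fin_cases s <;> norm_num, by simp [Fin.sum_univ_two]⟩, ?_, ?_⟩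
    · refine ⟨1, ?_, ?_⟩
      · intro x'
        fin_cases x' <;> simp [rowBR, evalRow_eq, U1G2] <;> norm_num
      · simp [evalRow_eq, U2G2]
    · rintro u ⟨x, hx, rfl⟩
      fin_cases x <;> simp [evalRow_eq, U2G2, neg_div] <;> nlinarith
  · rintro v ⟨y, ⟨hy0, hy1⟩, ⟨x, hx, rfl⟩, _⟩
    have h0 := hy0 0
    have h1 := hy0 1
    have hs : y 0 + y 1 = 1 := by simpa [Fin.sum_univ_two] using hy1
    fin_cases x <;>
      · rw [evalRow_eq]
        simp only [U2G2, Fin.mk_zero, Fin.mk_one, Matrix.cons_val_zero, Matrix.cons_val_one, Matrix.head_cons, neg_div]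
        nlinarith

theorem avg_stackVal2_eq_three_halves (γ : ℝ) (hγ0 : 0 < γ) (hγ1 : γ ≤ 1) :
    (stackVal2 (U1G1 γ) (U2G1 γ) + stackVal2 U1G2 (U2G2 γ)) / 2 = 3 / 2 := by
  rw [stackG1 γ hγ0 hγ1, stackG2 γ hγ0 hγ1]; norm_num
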